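/- arXiv:1405.6267 — 2 statements merged into one kernel-verified Lean document; each statement's English description precedes it below -/
import Mathlib

section
/- For r ≥ 1 and s/m ≤ 1/2 with 0 < s < m, the function x ↦ q_{r,x}^s (1 - q_{r,x})^{m-s} on [0, 1/2], where q_{r,x} = (1-(1-2x)^r)/2, attains its maximum at x = 1/2 - (1/2)(1 - 2s/m)^{1/r}. -/
/-!
As a function of `q ∈ [0, 1]`, the likelihood `q ^ s * (1 - q) ^ (m - s)` is maximal at
`q = s / m`: this is weighted AM-GM for `q / p` and `(1 - q) / (1 - p)` with weights `p = s / m`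
and `1 - p`. The map `x ↦ q_{r,x}` sends `[0, 1/2]` into `[0, 1]`, and solving `q_{r,x} = s / m`
gives `(1 - 2x) ^ r = 1 - 2s/m`, i.e. the stated point.
-/

open Real

theorem rpow_mul_one_sub_rpow_le {p q : ℝ} (hp0 : 0 ≤ p) (hp1 : p ≤ 1) (hq0 : 0 ≤ q)
    (hq1 : q ≤ 1) : q ^ p * (1 - q) ^ (1 - p) ≤ p ^ p * (1 - p) ^ (1 - p) := by
  rcases hp0.eq_or_lt with rfl | hp0
  · simpa using hq0
  rcases hp1.eq_or_lt with rfl | hp1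
  · simpa using hq1
  have hp1' : 0 < 1 - p := sub_pos.2 hp1
  have amgm := geom_mean_le_arith_mean2_weighted hp0.le hp1'.le (div_nonneg hq0 hp0.le)
    (div_nonneg (sub_nonneg.2 hq1) hp1'.le) (add_sub_cancel p 1)
  rwa [mul_div_cancel₀ _ hp0.ne', mul_div_cancel₀ _ hp1'.ne', add_sub_cancel,
    div_rpow hq0 hp0.le, div_rpow (sub_nonneg.2 hq1) hp1'.le, div_mul_div_comm,
    div_le_one (by positivity)] at amgm

theorem pow_mul_one_sub_pow_le {k n : ℕ} (hkn : k ≤ n) {q : ℝ} (hq0 : 0 ≤ q)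
    (hq1 : q ≤ 1) :
    q ^ k * (1 - q) ^ (n - k) ≤ ((k : ℝ) / n) ^ k * (1 - (k : ℝ) / n) ^ (n - k) := by
  rcases n.eq_zero_or_pos with rfl | hn
  · simp [Nat.le_zero.1 hkn]
  have hn' : (n : ℝ) ≠ 0 := by positivity
  have hp0 : 0 ≤ (k : ℝ) / n := by positivity
  have hp1 : (k : ℝ) / n ≤ 1 :=
    div_le_one_of_le₀ (by exact_mod_cast hkn) (Nat.cast_nonneg n)
  have hk : (k : ℝ) / n * n = k := div_mul_cancel₀ _ hn'
  have hnk : (1 - (k : ℝ) / n) * n = ((n - k : ℕ) : ℝ) := by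
    rw [Nat.cast_sub hkn, sub_mul, hk, one_mul]
  have h := pow_le_pow_left₀ (by positivity) (rpow_mul_one_sub_rpow_le hp0 hp1 hq0 hq1) n
  rwa [mul_pow, mul_pow, ← rpow_mul_natCast hq0, ← rpow_mul_natCast (sub_nonneg.2 hq1),
    ← rpow_mul_natCast hp0, ← rpow_mul_natCast (sub_nonneg.2 hp1), hk, hnk, rpow_natCast,
    rpow_natCast, rpow_natCast, rpow_natCast] at h

theorem isMaxOn_comp_of_eq_div {α : Type*} {k n : ℕ} (hkn : k ≤ n) {g : α → ℝ}
    {S : Set α} {x₀ : α} (hg : Set.MapsTo g S (Set.Icc 0 1)) (hx₀ : g x₀ = k / n) :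
    IsMaxOn (fun x => g x ^ k * (1 - g x) ^ (n - k)) S x₀ :=
  isMaxOn_iff.2 fun _ hx => hx₀ ▸ pow_mul_one_sub_pow_le hkn (hg hx).1 (hg hx).2

/-- `q_{r,x}`: the probability that a parity check of row weight `r` is violated when each bit
flips independently with probability `x`. -/
noncomputable def syndromeBitProb (r : ℕ) (x : ℝ) : ℝ := (1 - (1 - 2 * x) ^ r) / 2

theorem mapsTo_syndromeBitProb (r : ℕ) :
    Set.MapsTo (syndromeBitProb r) (Set.Icc 0 (1 / 2)) (Set.Icc 0 1) := by
  rintro x ⟨hx0, hx1⟩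
  have ht0 : 0 ≤ (1 - 2 * x) ^ r := pow_nonneg (by linarith) r
  have ht1 : (1 - 2 * x) ^ r ≤ 1 := pow_le_one₀ (by linarith) (by linarith)
  constructor <;> unfold syndromeBitProb <;> linarith

theorem half_sub_half_mul_rpow_mem_Icc {a : ℝ} (ha0 : 0 ≤ a) (ha1 : a ≤ 1) (r : ℕ) :
    1 / 2 - 1 / 2 * a ^ ((1 : ℝ) / r) ∈ Set.Icc (0 : ℝ) (1 / 2) := by
  have hb0 : 0 ≤ a ^ ((1 : ℝ) / r) := rpow_nonneg ha0 _
  have hb1 : a ^ ((1 : ℝ) / r) ≤ 1 := rpow_le_one ha0 ha1 (by positivity)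
  constructor <;> linarith

theorem syndromeBitProb_half_sub_half_mul_rpow {a : ℝ} (ha : 0 ≤ a) {r : ℕ} (hr : r ≠ 0) :
    syndromeBitProb r (1 / 2 - 1 / 2 * a ^ ((1 : ℝ) / r)) = (1 - a) / 2 := by
  rw [syndromeBitProb,
    show 1 - 2 * (1 / 2 - 1 / 2 * a ^ ((1 : ℝ) / r)) = a ^ ((1 : ℝ) / r) by ring,
    one_div, rpow_inv_natCast_pow ha hr]

theorem ml_estimate_interior_general (r m s : ℕ) (hr : 1 ≤ r) (hsm : s < m)
    (hhalf : (s : ℝ) / m ≤ 1 / 2) :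
    (1 / 2 - (1 / 2) * (1 - 2 * (s : ℝ) / m) ^ ((1 : ℝ) / r) ∈ Set.Icc (0:ℝ) (1 / 2)) ∧
    IsMaxOn
      (fun x : ℝ => ((1 - (1 - 2 * x) ^ r) / 2) ^ s * (1 - (1 - (1 - 2 * x) ^ r) / 2) ^ (m - s))
      (Set.Icc 0 (1 / 2))
      (1 / 2 - (1 / 2) * (1 - 2 * (s : ℝ) / m) ^ ((1 : ℝ) / r)) := by
  have ha0 : 0 ≤ 1 - 2 * (s : ℝ) / m := by rw [mul_div_assoc]; linarith
  have ha1 : 1 - 2 * (s : ℝ) / m ≤ 1 := sub_le_self _ (by positivity)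
  have hq :
      syndromeBitProb r (1 / 2 - 1 / 2 * (1 - 2 * (s : ℝ) / m) ^ ((1 : ℝ) / r)) = s / m := by
    rw [syndromeBitProb_half_sub_half_mul_rpow ha0 (by omega)]
    ring
  exact ⟨half_sub_half_mul_rpow_mem_Icc ha0 ha1 r,
    isMaxOn_comp_of_eq_div hsm.le (mapsTo_syndromeBitProb r) hq⟩

/-- For `r ≥ 1` and `s/m ≤ 1/2` with `0 < s < m`, the likelihood
`x ↦ q_{r,x}^s (1-q_{r,x})^(m-s)` on `[0,1/2]`, where `q_{r,x} = (1-(1-2x)^r)/2`,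
attains its maximum at `x = 1/2 - (1/2)(1 - 2s/m)^(1/r)`. -/
theorem ml_estimate_interior (r m s : ℕ) (hr : 1 ≤ r) (hs0 : 0 < s) (hsm : s < m)
    (hhalf : (s : ℝ) / m ≤ 1 / 2) :
    (1 / 2 - (1 / 2) * (1 - 2 * (s : ℝ) / m) ^ ((1 : ℝ) / r) ∈ Set.Icc (0:ℝ) (1 / 2)) ∧
    IsMaxOn
      (fun x : ℝ => ((1 - (1 - 2 * x) ^ r) / 2) ^ s * (1 - (1 - (1 - 2 * x) ^ r) / 2) ^ (m - s))
      (Set.Icc 0 (1 / 2))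
      (1 / 2 - (1 / 2) * (1 - 2 * (s : ℝ) / m) ^ ((1 : ℝ) / r)) :=
  ml_estimate_interior_general r m s hr hsm hhalf
end

section
/- For r ≥ 1 and s/m > 1/2 (with s ≤ m), the function x ↦ q_{r,x}^s (1 - q_{r,x})^{m-s} on [0, 1/2], where q_{r,x} = (1-(1-2x)^r)/2, attains its maximum at x = 1/2. -/
/-- For `r ≥ 1` and `s/m > 1/2` (with `s ≤ m`), the likelihood
`x ↦ q_{r,x}^s (1-q_{r,x})^(m-s)` on `[0,1/2]`, where `q_{r,x} = (1-(1-2x)^r)/2`,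
attains its maximum at `x = 1/2`. -/
theorem ml_estimate_boundary (r m s : ℕ) (hr : 1 ≤ r) (hsm : s ≤ m)
    (hhalf : (1 : ℝ) / 2 < (s : ℝ) / m) :
    IsMaxOn
      (fun x : ℝ => ((1 - (1 - 2 * x) ^ r) / 2) ^ s * (1 - (1 - (1 - 2 * x) ^ r) / 2) ^ (m - s))
      (Set.Icc 0 (1 / 2)) (1 / 2) := by
  have hm : 0 < m := by
    rcases Nat.eq_zero_or_pos m with h | h
    · subst h
      interval_cases s
      norm_num at hhalf
    · exact h
  have h2s : m ≤ 2 * s := by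
    rw [div_lt_div_iff₀ (by norm_num) (by exact_mod_cast hm)] at hhalf
    have : (m : ℝ) < 2 * s := by linarith
    exact_mod_cast this.le
  intro x hx
  simp only [Set.mem_Icc] at hx
  have hval : ((1 - (1 - 2 * (1/2 : ℝ)) ^ r) / 2) ^ s *
      (1 - (1 - (1 - 2 * (1/2 : ℝ)) ^ r) / 2) ^ (m - s) = (1/2 : ℝ) ^ m := by
    have h0 : (1 - 2 * (1/2 : ℝ)) = 0 := by norm_num
    rw [h0, zero_pow (by omega : r ≠ 0)]
    norm_num
    rw [← pow_add]
    congr 1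
    omega
  simp only [Set.mem_setOf_eq]
  show ((1 - (1 - 2 * x) ^ r) / 2) ^ s * (1 - (1 - (1 - 2 * x) ^ r) / 2) ^ (m - s) ≤
      ((1 - (1 - 2 * (1/2 : ℝ)) ^ r) / 2) ^ s * (1 - (1 - (1 - 2 * (1/2 : ℝ)) ^ r) / 2) ^ (m - s)
  rw [hval]
  set t := (1 - 2 * x) ^ r with ht
  have ht0 : 0 ≤ t := pow_nonneg (by linarith [hx.2]) r
  have ht1 : t ≤ 1 := pow_le_one₀ (by linarith [hx.2]) (by linarith [hx.1])
  set q := (1 - t) / 2 with hq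
  have hq0 : 0 ≤ q := by rw [hq]; linarith
  have hq2 : q ≤ 1/2 := by rw [hq]; linarith
  have h1q : 1 - (1 - t) / 2 = 1 - q := by rw [hq]
  rw [h1q]
  have key : q ^ s * (1 - q) ^ (m - s) = q ^ (2*s - m) * (q * (1 - q)) ^ (m - s) := by
    rw [mul_pow, ← mul_assoc, ← pow_add]
    congr 2
    omega
  rw [key]
  have hqq : q * (1 - q) ≤ 1/4 := by nlinarith [sq_nonneg (q - 1/2)]
  have hqq0 : 0 ≤ q * (1 - q) := mul_nonneg hq0 (by linarith)
  calc q ^ (2*s - m) * (q * (1 - q)) ^ (m - s)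
      ≤ (1/2 : ℝ) ^ (2*s - m) * (1/4 : ℝ) ^ (m - s) := by
        apply mul_le_mul (pow_le_pow_left₀ hq0 hq2 _) (pow_le_pow_left₀ hqq0 hqq _)
          (pow_nonneg hqq0 _) (pow_nonneg (by norm_num) _)
    _ = (1/2 : ℝ) ^ m := by
        rw [show (1/4 : ℝ) = (1/2) ^ 2 by norm_num, ← pow_mul, ← pow_add]
        congr 1
        omega
end
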